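/- arXiv:2106.08825 — 8 statements merged into one kernel-verified Lean document; each statement's English description precedes it below -/
import Mathlib

section
/- Let $p$ be an odd prime, $d \geq 1$, $e \geq 0$, and set $q = p^e$. In $\mathbb{F}_p[X_1,\dots,X_{d+1}]$, the element $X_{d+1}^{(p+1)q}$ lies in the ideal generated by $X_1^{pq}, X_2^{pq}, \dots, X_d^{pq}$ and $X_1^{p+1} + X_2^{p+1} + \cdots + X_{d+1}^{p+1}$. -/
/-! Write `y ^ (p + 1) = F - ∑ xᵢ ^ (p + 1)` with `F = ∑ xᵢ ^ (p + 1) + y ^ (p + 1)`. Raising to the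
`q = p ^ e`-th power is additive in characteristic `p`, so `y ^ ((p + 1) q) = F ^ q - ∑ xᵢ ^ q · xᵢ ^ (p q)`,
which visibly lies in the ideal generated by `F` and the `xᵢ ^ (p q)`. -/

section CharP

variable {R ι : Type*} [CommRing R] (p : ℕ) [ExpChar R p]

theorem sum_pow_succ_pow_expChar_mem_span [Fintype ι] (x : ι → R) (e : ℕ) :
    (∑ i, x i ^ (p + 1)) ^ p ^ e ∈ Ideal.span (Set.range fun i => x i ^ (p * p ^ e)) := by
  rw [sum_pow_char_pow]
  refine Ideal.sum_mem _ fun i _ => ?_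
  have hsplit : (x i ^ (p + 1)) ^ p ^ e = x i ^ p ^ e * x i ^ (p * p ^ e) := by ring
  rw [hsplit]
  exact Ideal.mul_mem_left _ _ (Ideal.subset_span ⟨i, rfl⟩)

theorem pow_mem_span_pow_expChar_of_sum_pow_succ [Fintype ι] (x : ι → R) (y : R) (e : ℕ) :
    y ^ ((p + 1) * p ^ e) ∈ Ideal.span
      (Set.range (fun i => x i ^ (p * p ^ e)) ∪ {∑ i, x i ^ (p + 1) + y ^ (p + 1)}) := by
  set F := ∑ i, x i ^ (p + 1) + y ^ (p + 1)
  have hfrob : y ^ ((p + 1) * p ^ e) = F ^ p ^ e - (∑ i, x i ^ (p + 1)) ^ p ^ e := by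
    rw [← sub_pow_expChar_pow, pow_mul]
    ring
  rw [hfrob]
  refine Ideal.sub_mem _ (Ideal.pow_mem_of_mem _ ?_ _ (expChar_pow_pos R p e)) ?_
  · exact Ideal.subset_span (Set.mem_union_right _ rfl)
  · exact Ideal.span_mono Set.subset_union_left (sum_pow_succ_pow_expChar_mem_span p x e)

end CharP

open MvPolynomial in
theorem stmt_4_general (p : ℕ) (hp : p.Prime) (d : ℕ)
    (e : ℕ) (q : ℕ) (hq : q = p ^ e) :
    (X (Fin.last d) : MvPolynomial (Fin (d + 1)) (ZMod p)) ^ ((p + 1) * q)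
      ∈ Ideal.span ((Set.range fun i : Fin d =>
            (X i.castSucc : MvPolynomial (Fin (d + 1)) (ZMod p)) ^ (p * q)) ∪
          {∑ i : Fin (d + 1), X i ^ (p + 1)}) := by
  have : Fact p.Prime := ⟨hp⟩
  subst hq
  rw [Fin.sum_univ_castSucc]
  exact pow_mem_span_pow_expChar_of_sum_pow_succ p _ _ e

open MvPolynomial in
theorem stmt_4 (p : ℕ) (hp : p.Prime) (hodd : Odd p) (d : ℕ) (hd : 1 ≤ d)
    (e : ℕ) (q : ℕ) (hq : q = p ^ e) :
    (X (Fin.last d) : MvPolynomial (Fin (d + 1)) (ZMod p)) ^ ((p + 1) * q)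
      ∈ Ideal.span ((Set.range fun i : Fin d =>
            (X i.castSucc : MvPolynomial (Fin (d + 1)) (ZMod p)) ^ (p * q)) ∪
          {∑ i : Fin (d + 1), X i ^ (p + 1)}) :=
  stmt_4_general p hp d e q hq
end

section
/- Let $p$ be an odd prime, $d \geq 1$, $e \geq 0$. In $\mathbb{F}_p[X_1,\dots,X_{d+1}]$, the element $X_{d+1}^{2p^{e+1}}$ lies in the ideal generated by $X_1^{p^{e+1}}, \dots, X_d^{p^{e+1}}$ and $X_1^{p+1} + \cdots + X_{d+1}^{p+1}$. -/
/-!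
Raising `∑ xᵢ ^ (p + 1) + y ^ (p + 1)` to the power `q = p ^ e` is additive in characteristic `p`,
giving `∑ xᵢ ^ ((p + 1) q) + y ^ ((p + 1) q)`. Each `xᵢ ^ ((p + 1) q)` is a multiple of
`xᵢ ^ (p q)`, so `y ^ ((p + 1) q)` lies in the ideal, and hence so does its multiple `y ^ (2 p q)`.
-/

theorem Ideal.pow_mul_expChar_pow_mem_of_sum_add_pow_mem {R ι : Type*} [CommRing R]
    (p : ℕ) [ExpChar R p] {I : Ideal R} {s : Finset ι} {x : ι → R} {y : R} {k n e : ℕ}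
    (hsum : ∑ i ∈ s, x i ^ k + y ^ k ∈ I) (hx : ∀ i ∈ s, x i ^ n ∈ I) (hn : n ≤ k * p ^ e) :
    y ^ (k * p ^ e) ∈ I := by
  have hfrob : (∑ i ∈ s, x i ^ k + y ^ k) ^ p ^ e
      = ∑ i ∈ s, x i ^ (k * p ^ e) + y ^ (k * p ^ e) := by
    simp only [add_pow_expChar_pow, sum_pow_char_pow, ← pow_mul]
  have hy : y ^ (k * p ^ e)
      = (∑ i ∈ s, x i ^ k + y ^ k) ^ p ^ e - ∑ i ∈ s, x i ^ (k * p ^ e) := by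
    rw [hfrob, add_sub_cancel_left]
  rw [hy]
  exact I.sub_mem (I.pow_mem_of_mem hsum _ (expChar_pow_pos R p e))
    (I.sum_mem fun i hi => I.pow_mem_of_pow_mem (hx i hi) hn)

open MvPolynomial in
theorem stmt_5_general (p : ℕ) (hp : p.Prime) (d : ℕ) (e : ℕ) :
    (X (Fin.last d) : MvPolynomial (Fin (d + 1)) (ZMod p)) ^ (2 * p ^ (e + 1))
      ∈ Ideal.span ((Set.range fun i : Fin d =>
            (X i.castSucc : MvPolynomial (Fin (d + 1)) (ZMod p)) ^ (p ^ (e + 1))) ∪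
          {∑ i : Fin (d + 1), X i ^ (p + 1)}) := by
  have : Fact p.Prime := ⟨hp⟩
  set I := Ideal.span ((Set.range fun i : Fin d =>
            (X i.castSucc : MvPolynomial (Fin (d + 1)) (ZMod p)) ^ (p ^ (e + 1))) ∪
          {∑ i : Fin (d + 1), X i ^ (p + 1)})
  have hsum : ∑ i : Fin d, X i.castSucc ^ (p + 1) + X (Fin.last d) ^ (p + 1) ∈ I := by
    rw [← Fin.sum_univ_castSucc fun i => (X i : MvPolynomial (Fin (d + 1)) (ZMod p)) ^ (p + 1)]
    exact Ideal.subset_span (Or.inr rfl)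
  have hx : ∀ i ∈ Finset.univ, X (Fin.castSucc i) ^ (p ^ (e + 1)) ∈ I :=
    fun i _ => Ideal.subset_span (Or.inl ⟨i, rfl⟩)
  have hlast := Ideal.pow_mul_expChar_pow_mem_of_sum_add_pow_mem p (e := e) hsum hx
    (by rw [pow_succ']; exact Nat.mul_le_mul_right _ p.le_succ)
  refine I.pow_mem_of_pow_mem hlast ?_
  rw [pow_succ', ← mul_assoc]
  exact Nat.mul_le_mul_right _ (by have := hp.one_le; omega)

open MvPolynomial in
theorem stmt_5 (p : ℕ) (hp : p.Prime) (hodd : Odd p) (d : ℕ) (hd : 1 ≤ d) (e : ℕ) :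
    (X (Fin.last d) : MvPolynomial (Fin (d + 1)) (ZMod p)) ^ (2 * p ^ (e + 1))
      ∈ Ideal.span ((Set.range fun i : Fin d =>
            (X i.castSucc : MvPolynomial (Fin (d + 1)) (ZMod p)) ^ (p ^ (e + 1))) ∪
          {∑ i : Fin (d + 1), X i ^ (p + 1)}) :=
  stmt_5_general p hp d e
end

section
/- Let $p$ be an odd prime, $d \geq 1$, $e \geq 0$, and write $q = p^{e+1}$. Let $n \geq 1$ and suppose $1 \leq r \leq p$ where $n = (p+1)m + r$; if $m = 0$ assume $r > 1$. Then in $\mathbb{F}_p[X_1,\dots,X_{d+1}]$, the element $X_{d+1}^{nq}$ lies in $(X_1^q,\dots,X_d^q)^{n-1} + (X_1^{p+1}+\cdots+X_{d+1}^{p+1})$. If instead $(p+1) \mid n$, then $X_{d+1}^{nq}$ lies in $(X_1^q,\dots,X_d^q)^{n} + (X_1^{p+1}+\cdots+X_{d+1}^{p+1})$. -/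
/-! Write `x = X_{d+1}`, `s = X_1^{p+1} + ⋯ + X_d^{p+1}` and `J = (X_1^p, …, X_d^p)`, so that
`x^{p+1} ≡ -s` modulo `f`. Since `s ∈ J` and, by the freshman's dream, `s^p = ∑ (X_i^p)^{p+1} ∈ J^{p+1}`,
we get `s^{mp+r} ∈ J^{(p+1)m+r}`, hence `x^{(p+1)(mp+r)} ∈ J^{(p+1)m+r} + (f)`. For
`n = (p+1)m + r + 1` with `r ≤ p` we have `np ≥ (p+1)(mp+r)`, so `x^{np} ∈ J^{n-1} + (f)`, and for
`n = (p+1)m` even `x^{np} ∈ J^n + (f)`. Applying the Frobenius `p^e` times turns `J` into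
`(X_1^q, …, X_d^q)` and maps `(f)` into itself. -/

open Set

namespace Ideal

variable {R : Type*} [CommRing R]

theorem pow_mul_mem_sup_of_sub_mem {J K : Ideal R} {x y : R} {a k : ℕ}
    (hxy : x ^ a - y ∈ K) (hy : y ^ k ∈ J) : x ^ (a * k) ∈ J ⊔ K := by
  rw [pow_mul, ← sub_add_cancel ((x ^ a) ^ k) (y ^ k)]
  exact add_mem (mem_sup_right (K.mem_of_dvd (sub_dvd_pow_sub_pow _ _ k) hxy)) (mem_sup_left hy)

theorem sum_pow_succ_mem_span_range_pow (p : ℕ) {ι : Type*} [Fintype ι] (g : ι → R) :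
    ∑ i, g i ^ (p + 1) ∈ span (range fun i => g i ^ p) :=
  sum_mem _ fun i _ => by
    rw [pow_succ]
    exact mul_mem_right _ _ (subset_span (mem_range_self i))

section ExpChar

variable (p : ℕ) [ExpChar R p]

theorem pow_expChar_pow_mem_map_sup_span_singleton {J : Ideal R} {f g : R} {k : ℕ} (e : ℕ)
    (hg : g ∈ J ^ k ⊔ span {f}) :
    g ^ p ^ e ∈ J.map (iterateFrobenius R p e) ^ k ⊔ span {f} := by
  have hmap := mem_map_of_mem (iterateFrobenius R p e) hg
  rw [map_sup, Ideal.map_pow, map_span, image_singleton] at hmap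
  have hf : span {iterateFrobenius R p e f} ≤ span {f} :=
    span_singleton_le_span_singleton.2 (dvd_pow_self f (expChar_pow_pos R p e).ne')
  exact sup_le_sup_left hf _ hmap

variable {ι : Type*} (g : ι → R)

theorem map_iterateFrobenius_span_range_pow (e : ℕ) :
    (span (range fun i => g i ^ p)).map (iterateFrobenius R p e) =
      span (range fun i => g i ^ p ^ (e + 1)) := by
  rw [map_span, ← range_comp]
  congr 2
  funext i
  rw [Function.comp_apply, iterateFrobenius_def, ← pow_mul, pow_succ']

variable [Fintype ι]

theorem sum_pow_succ_pow_expChar_mem_span_range_pow_pow :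
    (∑ i, g i ^ (p + 1)) ^ p ∈ span (range fun i => g i ^ p) ^ (p + 1) := by
  rw [sum_pow_char]
  refine sum_mem _ fun i _ => ?_
  rw [← pow_mul, mul_comm, pow_mul]
  exact pow_mem_pow (subset_span (mem_range_self i)) _

theorem sum_pow_succ_pow_mem_span_range_pow_pow (m r : ℕ) :
    (∑ i, g i ^ (p + 1)) ^ (m * p + r) ∈ span (range fun i => g i ^ p) ^ ((p + 1) * m + r) := by
  rw [pow_add _ (m * p), pow_mul' _ m p, pow_add _ ((p + 1) * m), pow_mul _ (p + 1) m]
  exact mul_mem_mul (pow_mem_pow (sum_pow_succ_pow_expChar_mem_span_range_pow_pow p g) m)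
    (pow_mem_pow (sum_pow_succ_mem_span_range_pow p g) r)

variable (x : R)

theorem pow_succ_mul_mem_span_range_pow_pow_sup (m r : ℕ) :
    x ^ ((p + 1) * (m * p + r)) ∈ span (range fun i => g i ^ p) ^ ((p + 1) * m + r) ⊔
      span {x ^ (p + 1) + ∑ i, g i ^ (p + 1)} := by
  refine pow_mul_mem_sup_of_sub_mem (y := -∑ i, g i ^ (p + 1)) ?_ ?_
  · rw [sub_neg_eq_add]
    exact mem_span_singleton_self _
  · rw [neg_pow]
    exact mul_mem_left _ _ (sum_pow_succ_pow_mem_span_range_pow_pow p g m r)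

theorem pow_mul_expChar_pow_mem_of_pow_mul_expChar_mem {k n : ℕ} (e : ℕ)
    (h : x ^ (n * p) ∈ span (range fun i => g i ^ p) ^ k ⊔
      span {x ^ (p + 1) + ∑ i, g i ^ (p + 1)}) :
    x ^ (n * p ^ (e + 1)) ∈ span (range fun i => g i ^ p ^ (e + 1)) ^ k ⊔
      span {x ^ (p + 1) + ∑ i, g i ^ (p + 1)} := by
  have := pow_expChar_pow_mem_map_sup_span_singleton p e h
  rwa [map_iterateFrobenius_span_range_pow, ← pow_mul, mul_assoc, ← pow_succ'] at this

theorem pow_mul_expChar_pow_mem_span_range_pow_pow_sup {m r : ℕ} (hr : r ≤ p) (e : ℕ) :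
    x ^ (((p + 1) * m + r + 1) * p ^ (e + 1)) ∈
      span (range fun i => g i ^ p ^ (e + 1)) ^ ((p + 1) * m + r) ⊔
        span {x ^ (p + 1) + ∑ i, g i ^ (p + 1)} := by
  refine pow_mul_expChar_pow_mem_of_pow_mul_expChar_mem p g x e ?_
  have hexp : ((p + 1) * m + r + 1) * p = (p + 1) * (m * p + r) + (p - r) := by
    zify [hr]; ring
  rw [hexp, pow_add x ((p + 1) * _)]
  exact mul_mem_right _ _ (pow_succ_mul_mem_span_range_pow_pow_sup p g x m r)

theorem pow_succ_mul_expChar_pow_mem_span_range_pow_pow_sup (m e : ℕ) :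
    x ^ ((p + 1) * m * p ^ (e + 1)) ∈ span (range fun i => g i ^ p ^ (e + 1)) ^ ((p + 1) * m) ⊔
      span {x ^ (p + 1) + ∑ i, g i ^ (p + 1)} := by
  refine pow_mul_expChar_pow_mem_of_pow_mul_expChar_mem p g x e ?_
  simpa only [add_zero, mul_assoc] using pow_succ_mul_mem_span_range_pow_pow_sup p g x m 0

end ExpChar

end Ideal

open MvPolynomial in
theorem stmt_6_general (p : ℕ) (hp : p.Prime) (d : ℕ) (e : ℕ)
    (q : ℕ) (hq : q = p ^ (e + 1))
    (I : Ideal (MvPolynomial (Fin (d + 1)) (ZMod p)))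
    (hI : I = Ideal.span (Set.range fun i : Fin d =>
        (X i.castSucc : MvPolynomial (Fin (d + 1)) (ZMod p)) ^ q))
    (f : MvPolynomial (Fin (d + 1)) (ZMod p))
    (hf : f = ∑ i : Fin (d + 1), X i ^ (p + 1)) :
    (∀ n m r : ℕ, 1 ≤ n → n = (p + 1) * m + r → 1 ≤ r → r ≤ p → (m = 0 → 1 < r) →
        (X (Fin.last d) : MvPolynomial (Fin (d + 1)) (ZMod p)) ^ (n * q)
          ∈ I ^ (n - 1) ⊔ Ideal.span {f}) ∧
    (∀ n : ℕ, 1 ≤ n → (p + 1) ∣ n →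
        (X (Fin.last d) : MvPolynomial (Fin (d + 1)) (ZMod p)) ^ (n * q)
          ∈ I ^ n ⊔ Ideal.span {f}) := by
  have := Fact.mk hp
  rw [Fin.sum_univ_castSucc, add_comm (∑ _ : Fin d, _)] at hf
  subst hq hI hf
  constructor
  · rintro n m r - rfl hr hrp -
    obtain ⟨r, rfl⟩ : ∃ r', r = r' + 1 := ⟨r - 1, by omega⟩
    exact Ideal.pow_mul_expChar_pow_mem_span_range_pow_pow_sup p _ _ (by omega) e
  · rintro n - ⟨m, rfl⟩
    exact Ideal.pow_succ_mul_expChar_pow_mem_span_range_pow_pow_sup p _ _ m e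

open MvPolynomial in
theorem stmt_6 (p : ℕ) (hp : p.Prime) (hodd : Odd p) (d : ℕ) (hd : 1 ≤ d) (e : ℕ)
    (q : ℕ) (hq : q = p ^ (e + 1))
    (I : Ideal (MvPolynomial (Fin (d + 1)) (ZMod p)))
    (hI : I = Ideal.span (Set.range fun i : Fin d =>
        (X i.castSucc : MvPolynomial (Fin (d + 1)) (ZMod p)) ^ q))
    (f : MvPolynomial (Fin (d + 1)) (ZMod p))
    (hf : f = ∑ i : Fin (d + 1), X i ^ (p + 1)) :
    (∀ n m r : ℕ, 1 ≤ n → n = (p + 1) * m + r → 1 ≤ r → r ≤ p → (m = 0 → 1 < r) →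
        (X (Fin.last d) : MvPolynomial (Fin (d + 1)) (ZMod p)) ^ (n * q)
          ∈ I ^ (n - 1) ⊔ Ideal.span {f}) ∧
    (∀ n : ℕ, 1 ≤ n → (p + 1) ∣ n →
        (X (Fin.last d) : MvPolynomial (Fin (d + 1)) (ZMod p)) ^ (n * q)
          ∈ I ^ n ⊔ Ideal.span {f}) :=
  stmt_6_general p hp d e q hq I hI f hf
end

section
/- Let $p$ be an odd prime, $d \geq 1$, $e \geq 0$, $q = p^{e+1}$, and $n \geq 1$. Suppose $b_1, \dots, b_{d+1}$ are nonnegative integers with $b_1 + \cdots + b_{d+1} = n+1$. Then in $\mathbb{F}_p[X_1,\dots,X_{d+1}]$, the monomial $X_1^{b_1 q} X_2^{b_2 q} \cdots X_{d+1}^{b_{d+1} q}$ lies in the ideal $(X_1^q,\dots,X_d^q)^n + (X_1^{p+1} + \cdots + X_{d+1}^{p+1})$. -/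
/-!
Write `F = S + z ^ (p + 1)` with `S = ∑ xᵢ ^ (p + 1)` and `z` the last variable, and let
`J = (xᵢ ^ q)`. Since Frobenius is additive, modulo `F` the element `w = z ^ (q / p)` satisfies
`w ^ (p + 1) = -∑ xᵢ ^ ((p + 1) q / p) ∈ J` and
`w ^ ((p + 1) p) = -∑ (xᵢ ^ q) ^ (p + 1) ∈ J ^ (p + 1)`.
These two facts alone give `w ^ (B p) ∈ J ^ (B - 1)` for every `B`: for `B ≤ p + 1` write
`B p = (B - 1)(p + 1) + (p + 1 - B)`, and for larger `B` split off a factor `w ^ ((p + 1) p)`.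
The remaining variables contribute a monomial lying in `J ^ (n + 1 - B)`.
-/

theorem pow_mul_mem_pow_sub_one {R : Type*} [CommSemiring R] {I : Ideal R} {w : R} {p : ℕ}
    (h₁ : w ^ (p + 1) ∈ I) (h₂ : w ^ ((p + 1) * p) ∈ I ^ (p + 1)) (B : ℕ) :
    w ^ (B * p) ∈ I ^ (B - 1) := by
  induction B using Nat.strong_induction_on with
  | _ B ih =>
  rcases Nat.lt_or_ge (p + 1) B with hB | hB
  · obtain ⟨C, rfl⟩ : ∃ C, B = C + (p + 1) := ⟨B - (p + 1), by omega⟩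
    rw [add_mul, pow_add, show C + (p + 1) - 1 = C - 1 + (p + 1) by omega, pow_add]
    exact Ideal.mul_mem_mul (ih C (by omega)) h₂
  · rcases B with _ | c
    · simp
    · have hc : (c + 1) * p = (p + 1) * c + (p - c) := by
        rw [Nat.add_one_mul, Nat.add_one_mul, Nat.mul_comm]; omega
      rw [hc, pow_add, pow_mul, Nat.add_sub_cancel]
      exact Ideal.mul_mem_right _ _ (Ideal.pow_mem_pow h₁ c)

theorem pow_mul_mem_pow_sub_one_sup {R : Type*} [CommRing R] {I K : Ideal R} {w : R} {p : ℕ}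
    (h₁ : w ^ (p + 1) ∈ I ⊔ K) (h₂ : w ^ ((p + 1) * p) ∈ I ^ (p + 1) ⊔ K) (B : ℕ) :
    w ^ (B * p) ∈ I ^ (B - 1) ⊔ K := by
  simp only [← Ideal.mem_quotient_iff_mem_sup, Ideal.map_pow, map_pow] at *
  exact pow_mul_mem_pow_sub_one h₁ h₂ B

theorem Ideal.mul_mem_mul_sup {R : Type*} [CommSemiring R] {I J K : Ideal R} {x y : R}
    (hx : x ∈ I) (hy : y ∈ J ⊔ K) : x * y ∈ I * J ⊔ K := by
  have hxy := Ideal.mul_mem_mul hx hy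
  rw [Ideal.mul_sup] at hxy
  exact (sup_le_sup_left Ideal.mul_le_right (I * J)) hxy

theorem Ideal.prod_pow_mul_mem_span_pow_sum {R ι : Type*} [CommSemiring R] [Fintype ι]
    (x : ι → R) (b : ι → ℕ) (q : ℕ) :
    ∏ i, x i ^ (b i * q) ∈ Ideal.span (Set.range fun i => x i ^ q) ^ ∑ i, b i := by
  rw [← Finset.prod_pow_eq_pow_sum]
  refine Ideal.prod_mem_prod fun i _ => ?_
  rw [mul_comm, pow_mul]
  exact Ideal.pow_mem_pow (Ideal.subset_span (Set.mem_range_self i)) _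

theorem pow_mul_mem_span_pow_sup_span_sum {R ι : Type*} [CommRing R] (p : ℕ) [ExpChar R p]
    [Fintype ι] (x : ι → R) (z : R) (e B : ℕ) :
    z ^ (B * p ^ (e + 1)) ∈ Ideal.span (Set.range fun i => x i ^ p ^ (e + 1)) ^ (B - 1) ⊔
      Ideal.span {∑ i, x i ^ (p + 1) + z ^ (p + 1)} := by
  set J := Ideal.span (Set.range fun i => x i ^ p ^ (e + 1))
  set S := ∑ i, x i ^ (p + 1)
  set K := Ideal.span {S + z ^ (p + 1)}
  have hz : z ^ (p + 1) = (S + z ^ (p + 1)) - S := (add_sub_cancel_left _ _).symm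
  have hK (n : ℕ) : (S + z ^ (p + 1)) ^ p ^ n ∈ K :=
    Ideal.mem_span_singleton.2 (dvd_pow_self _ (expChar_pow_pos R p n).ne')
  have h₁ : (z ^ p ^ e) ^ (p + 1) ∈ J ⊔ K := by
    rw [← pow_mul, mul_comm, pow_mul, hz, sub_pow_expChar_pow, sum_pow_char_pow]
    refine sub_mem (Ideal.mem_sup_right (hK _)) (Ideal.mem_sup_left (Ideal.sum_mem _ fun i _ => ?_))
    rw [← pow_mul, mul_comm, pow_mul, pow_succ, ← pow_mul, ← pow_succ]
    exact Ideal.mul_mem_right _ _ (Ideal.subset_span ⟨i, rfl⟩)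
  have h₂ : (z ^ p ^ e) ^ ((p + 1) * p) ∈ J ^ (p + 1) ⊔ K := by
    rw [← pow_mul, show p ^ e * ((p + 1) * p) = (p + 1) * p ^ (e + 1) by ring, pow_mul, hz,
      sub_pow_expChar_pow, sum_pow_char_pow]
    refine sub_mem (Ideal.mem_sup_right (hK _)) (Ideal.mem_sup_left (Ideal.sum_mem _ fun i _ => ?_))
    rw [← pow_mul, mul_comm, pow_mul]
    exact Ideal.pow_mem_pow (Ideal.subset_span (Set.mem_range_self i)) _
  have hw := pow_mul_mem_pow_sub_one_sup h₁ h₂ B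
  rwa [← pow_mul, show p ^ e * (B * p) = B * p ^ (e + 1) by ring] at hw

open MvPolynomial in
theorem stmt_7_general (p : ℕ) (hp : p.Prime) (d : ℕ) (e : ℕ)
    (q : ℕ) (hq : q = p ^ (e + 1)) (n : ℕ)
    (b : Fin (d + 1) → ℕ) (hb : ∑ i, b i = n + 1) :
    (∏ i : Fin (d + 1), (X i : MvPolynomial (Fin (d + 1)) (ZMod p)) ^ (b i * q))
      ∈ (Ideal.span (Set.range fun i : Fin d =>
            (X i.castSucc : MvPolynomial (Fin (d + 1)) (ZMod p)) ^ q)) ^ n ⊔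
        Ideal.span {∑ i : Fin (d + 1), X i ^ (p + 1)} := by
  have : Fact p.Prime := ⟨hp⟩
  subst hq
  set x : Fin d → MvPolynomial (Fin (d + 1)) (ZMod p) := fun i => X i.castSucc
  set J := Ideal.span (Set.range fun i => x i ^ p ^ (e + 1))
  rw [Fin.sum_univ_castSucc] at hb
  rw [Fin.prod_univ_castSucc, Fin.sum_univ_castSucc]
  have hx := Ideal.prod_pow_mul_mem_span_pow_sum x (fun i => b i.castSucc) (p ^ (e + 1))
  have hz := pow_mul_mem_span_pow_sup_span_sum p x (X (Fin.last d)) e (b (Fin.last d))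
  have hJ : J ^ (∑ i : Fin d, b i.castSucc) * J ^ (b (Fin.last d) - 1) ≤ J ^ n := by
    rw [← pow_add]
    exact Ideal.pow_le_pow_right (by omega)
  exact sup_le_sup_right hJ _ (Ideal.mul_mem_mul_sup hx hz)

open MvPolynomial in
theorem stmt_7 (p : ℕ) (hp : p.Prime) (hodd : Odd p) (d : ℕ) (hd : 1 ≤ d) (e : ℕ)
    (q : ℕ) (hq : q = p ^ (e + 1)) (n : ℕ) (hn : 1 ≤ n)
    (b : Fin (d + 1) → ℕ) (hb : ∑ i, b i = n + 1) :
    (∏ i : Fin (d + 1), (X i : MvPolynomial (Fin (d + 1)) (ZMod p)) ^ (b i * q))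
      ∈ (Ideal.span (Set.range fun i : Fin d =>
            (X i.castSucc : MvPolynomial (Fin (d + 1)) (ZMod p)) ^ q)) ^ n ⊔
        Ideal.span {∑ i : Fin (d + 1), X i ^ (p + 1)} :=
  stmt_7_general p hp d e q hq n b hb
end

section
/- In the polynomial ring $\mathbb{F}_3[X,Y,Z,W]$, the element $W^{30}$ does NOT lie in the ideal generated by $X^{27}$, $Y^{27}$, $Z^{27}$, and $X^4 + Y^4 + Z^4 + W^4$. -/
/-!
Regard `f = x⁴ + y⁴ + z⁴ + w⁴` as a monic polynomial of degree 4 in `w` over `k[x,y,z]` and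
read off, from the remainder of a polynomial modulo `f`, the coefficient of `x⁴y¹²z¹² w²`.
This is additive and kills every multiple of `f`; it also kills every multiple of `x²⁷`, `y²⁷`,
`z²⁷`, since the reduction is `k[x,y,z]`-linear and all exponents of `x⁴y¹²z¹²` are below 27;
so it vanishes on the whole ideal.
But `w³⁰ = w² (w⁴)⁷` has remainder `-(x⁴ + y⁴ + z⁴)⁷ w²`, and in characteristic 3
`(x⁴ + y⁴ + z⁴)⁷ = (x¹² + y¹² + z¹²)² (x⁴ + y⁴ + z⁴)` contains `x⁴y¹²z¹²` with coefficient 2,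
so the functional takes the value `-2 = 1` on `w³⁰`.
-/

open MvPolynomial

namespace Polynomial

variable {R : Type*} [CommRing R]

theorem X_pow_modByMonic_X_pow_add_C {n r : ℕ} (hr : r < n) (b : R) (q : ℕ) :
    X ^ (n * q + r) %ₘ (X ^ n + C b) = C ((-b) ^ q) * X ^ r := by
  nontriviality R
  have hmonic : (X ^ n + C b).Monic := monic_X_pow_add_C b (by omega)
  have hdvd : X ^ n + C b ∣ X ^ (n * q + r) - C ((-b) ^ q) * X ^ r := by
    have := sub_dvd_pow_sub_pow (X ^ n) (C (-b)) q
    rw [C_neg, sub_neg_eq_add] at this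
    rw [pow_add, pow_mul, C_pow, C_neg, ← sub_mul]
    exact this.mul_right _
  rw [modByMonic_eq_of_dvd_sub hmonic hdvd, (modByMonic_eq_self_iff hmonic).2]
  calc degree (C ((-b) ^ q) * X ^ r) ≤ r := degree_C_mul_X_pow_le _ _
    _ < n := by exact_mod_cast hr
    _ = degree (X ^ n + C b) := (degree_X_pow_add_C (by omega) b).symm

end Polynomial

theorem AddMonoidHom.eq_zero_of_mem_ideal_span {A M : Type*} [CommRing A] [AddCommGroup M]
    (Λ : A →+ M) {S : Set A} (hS : ∀ s ∈ S, ∀ r, Λ (r * s) = 0) {p : A}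
    (hp : p ∈ Ideal.span S) : Λ p = 0 := by
  suffices ∀ r, Λ (r * p) = 0 by simpa using this 1
  induction hp using Submodule.span_induction with
  | mem s hs => exact hS s hs
  | zero => simp
  | add x y _ _ hx hy => intro r; rw [mul_add, map_add, hx, hy, add_zero]
  | smul a x _ hx => intro r; rw [smul_eq_mul, ← mul_assoc]; exact hx (r * a)

namespace MvPolynomial

variable {k : Type*} [CommRing k] {n : ℕ}

noncomputable def toPolynomialLast :
    MvPolynomial (Fin (n + 1)) k →ₐ[k] Polynomial (MvPolynomial (Fin n) k) :=
  aeval (Fin.lastCases Polynomial.X fun i => Polynomial.C (X i))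

@[simp]
theorem toPolynomialLast_X_last :
    toPolynomialLast (X (Fin.last n) : MvPolynomial _ k) = Polynomial.X := by
  simp [toPolynomialLast]

@[simp]
theorem toPolynomialLast_X_castSucc (i : Fin n) :
    toPolynomialLast (X i.castSucc : MvPolynomial _ k) = Polynomial.C (X i) := by
  simp [toPolynomialLast]

noncomputable def remCoeff (P : Polynomial (MvPolynomial (Fin n) k)) (j : ℕ)
    (m : Fin n →₀ ℕ) : MvPolynomial (Fin (n + 1)) k →+ k :=
  AddMonoidHom.mk' (fun p => coeff m ((toPolynomialLast p %ₘ P).coeff j)) fun p q => by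
    simp [Polynomial.add_modByMonic]

theorem remCoeff_eq_zero_of_dvd {P : Polynomial (MvPolynomial (Fin n) k)} (hP : P.Monic)
    (j : ℕ) (m : Fin n →₀ ℕ) {p : MvPolynomial (Fin (n + 1)) k}
    (hp : P ∣ toPolynomialLast p) : remCoeff P j m p = 0 := by
  simp [remCoeff, (Polynomial.modByMonic_eq_zero_iff_dvd hP).2 hp]

theorem remCoeff_mul_X_castSucc_pow (P : Polynomial (MvPolynomial (Fin n) k)) (j : ℕ)
    {m : Fin n →₀ ℕ} {i : Fin n} {e : ℕ} (he : m i < e) (r : MvPolynomial (Fin (n + 1)) k) :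
    remCoeff P j m (r * X i.castSucc ^ e) = 0 := by
  rw [remCoeff, AddMonoidHom.mk'_apply, map_mul, map_pow, toPolynomialLast_X_castSucc,
    ← Polynomial.C_pow, mul_comm, ← Polynomial.smul_eq_C_mul, Polynomial.smul_modByMonic,
    Polynomial.coeff_smul, smul_eq_mul, X_pow_eq_monomial, coeff_monomial_mul',
    if_neg (by simpa using he)]

theorem remCoeff_X_last_pow {d j : ℕ} (hj : j < d) (g : MvPolynomial (Fin n) k)
    (m : Fin n →₀ ℕ) (q : ℕ) :
    remCoeff (Polynomial.X ^ d + Polynomial.C g) j m (X (Fin.last n) ^ (d * q + j)) =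
      coeff m ((-g) ^ q) := by
  rw [remCoeff, AddMonoidHom.mk'_apply, map_pow, toPolynomialLast_X_last,
    Polynomial.X_pow_modByMonic_X_pow_add_C hj, Polynomial.coeff_C_mul_X_pow, if_pos rfl]

end MvPolynomial

theorem coeff_fermatQuartic_pow_seven :
    coeff (Finsupp.single 0 4 + Finsupp.single 1 12 + Finsupp.single 2 12)
      ((X 0 ^ 4 + X 1 ^ 4 + X 2 ^ 4 : MvPolynomial (Fin 3) (ZMod 3)) ^ 7) = 2 := by
  have hfrob : (X 0 ^ 4 + X 1 ^ 4 + X 2 ^ 4 : MvPolynomial (Fin 3) (ZMod 3)) ^ 3 =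
      X 0 ^ 12 + X 1 ^ 12 + X 2 ^ 12 := by
    rw [add_pow_char, add_pow_char]
    ring
  rw [show 7 = 3 * 2 + 1 from rfl, pow_succ, pow_mul, hfrob]
  simp only [sq, add_mul, mul_add, X_pow_eq_monomial, monomial_mul, coeff_add, coeff_monomial,
    Finsupp.ext_iff, Fin.forall_fin_succ, Finsupp.add_apply, Finsupp.single_apply]
  simp
  decide

open MvPolynomial in
theorem stmt_8 :
    (X 3 : MvPolynomial (Fin 4) (ZMod 3)) ^ 30
      ∉ Ideal.span ({X 0 ^ 27, X 1 ^ 27, X 2 ^ 27,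
          X 0 ^ 4 + X 1 ^ 4 + X 2 ^ 4 + X 3 ^ 4} :
            Set (MvPolynomial (Fin 4) (ZMod 3))) := by
  set g : MvPolynomial (Fin 3) (ZMod 3) := X 0 ^ 4 + X 1 ^ 4 + X 2 ^ 4
  set P := Polynomial.X ^ 4 + Polynomial.C g
  have hP : P.Monic := Polynomial.monic_X_pow_add_C g (by norm_num)
  set Λ := remCoeff P 2 (Finsupp.single 0 4 + Finsupp.single 1 12 + Finsupp.single 2 12)
  have hf : toPolynomialLast (X 0 ^ 4 + X 1 ^ 4 + X 2 ^ 4 + X 3 ^ 4 :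
      MvPolynomial (Fin 4) (ZMod 3)) = P := by
    change toPolynomialLast (X (Fin.castSucc 0) ^ 4 + X (Fin.castSucc 1) ^ 4 +
      X (Fin.castSucc 2) ^ 4 + X (Fin.last 3) ^ 4 : MvPolynomial (Fin 4) (ZMod 3)) = P
    simp only [map_add, map_pow, toPolynomialLast_X_castSucc, toPolynomialLast_X_last, P, g]
    ring
  have hΛ : Λ (X 3 ^ 30) = 1 := by
    rw [show (X 3 : MvPolynomial (Fin 4) (ZMod 3)) ^ 30 = X (Fin.last 3) ^ (4 * 7 + 2) from rfl,
      remCoeff_X_last_pow (by norm_num), Odd.neg_pow (by decide), coeff_neg,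
      coeff_fermatQuartic_pow_seven]
    decide
  intro hw
  refine one_ne_zero (hΛ.symm.trans (Λ.eq_zero_of_mem_ideal_span ?_ hw))
  simp only [Set.mem_insert_iff, Set.mem_singleton_iff, forall_eq_or_imp, forall_eq]
  refine ⟨fun r => ?_, fun r => ?_, fun r => ?_, fun r => ?_⟩
  · exact remCoeff_mul_X_castSucc_pow P 2 (i := 0) (by simp) r
  · exact remCoeff_mul_X_castSucc_pow P 2 (i := 1) (by simp) r
  · exact remCoeff_mul_X_castSucc_pow P 2 (i := 2) (by simp) r
  · exact remCoeff_eq_zero_of_dvd hP _ _ (by rw [map_mul, hf]; exact dvd_mul_left _ _)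
end

section
/- Let $K$ be a field and $R = K[X_1,\dots,X_{d+1}]/(f)$ where $f$ is homogeneous of degree $r \geq 2$ and monic in $X_{d+1}$, with $I = (x_1,\dots,x_d)$ and $\mathfrak{m} = (x_1,\dots,x_{d+1})$. Fix $t \in \mathbb{N}$ with $r \leq t+1$. Then $I^n + \mathfrak{m}^{n+t} = I^n$ for all $n \geq 1$. -/
/-!
Write `x = x_{d+1}`, so that `𝔪 = I + (x)`. As `f` is homogeneous of degree `r` and monic
in `x`, every monomial of `f - x ^ r` is divisible by some `x_i` with `i ≤ d`; hence
`x ^ r ∈ I 𝔪 ^ (r - 1)` in `R`. Expanding `(I + (x)) ^ r` then gives `𝔪 ^ r = I 𝔪 ^ (r - 1)`,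
i.e. `I` is a reduction of `𝔪` with reduction number at most `r - 1`, so
`𝔪 ^ (n + t) ⊆ 𝔪 ^ (n + r - 1) = I ^ n 𝔪 ^ (r - 1) ⊆ I ^ n`.
-/

namespace Ideal

variable {A : Type*} [CommSemiring A]

theorem sup_pow_succ_le (I J : Ideal A) (k : ℕ) :
    (I ⊔ J) ^ (k + 1) ≤ I * (I ⊔ J) ^ k ⊔ J ^ (k + 1) := by
  induction k with
  | zero => simp
  | succ k ih =>
    have hJ : J * (I ⊔ J) ^ (k + 1) ≤ I * (I ⊔ J) ^ (k + 1) ⊔ J ^ (k + 2) :=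
      calc J * (I ⊔ J) ^ (k + 1) ≤ J * (I * (I ⊔ J) ^ k ⊔ J ^ (k + 1)) := mul_mono_right ih
        _ = I * (J * (I ⊔ J) ^ k) ⊔ J ^ (k + 2) := by
          rw [mul_sup, mul_left_comm, ← pow_succ' J (k + 1)]
        _ ≤ I * (I ⊔ J) ^ (k + 1) ⊔ J ^ (k + 2) := by
          rw [pow_succ' (I ⊔ J)]
          gcongr
          exact le_sup_right
    calc (I ⊔ J) ^ (k + 2) = I * (I ⊔ J) ^ (k + 1) ⊔ J * (I ⊔ J) ^ (k + 1) := by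
          rw [pow_succ' _ (k + 1), sup_mul]
      _ ≤ I * (I ⊔ J) ^ (k + 1) ⊔ J ^ (k + 2) := sup_le le_sup_left hJ

theorem sup_span_singleton_pow_succ_le {I : Ideal A} {x : A} {k : ℕ}
    (hx : x ^ (k + 1) ∈ I * (I ⊔ span {x}) ^ k) :
    (I ⊔ span {x}) ^ (k + 1) ≤ I * (I ⊔ span {x}) ^ k :=
  (sup_pow_succ_le I _ k).trans <| sup_le le_rfl <| by
    rwa [span_singleton_pow, span_singleton_le_iff_mem]

theorem pow_add_le_pow_mul_of_pow_succ_le {I m : Ideal A} {k : ℕ}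
    (h : m ^ (k + 1) ≤ I * m ^ k) (n : ℕ) : m ^ (n + k) ≤ I ^ n * m ^ k := by
  induction n with
  | zero => simp
  | succ n ih =>
    calc m ^ (n + 1 + k) = m ^ n * m ^ (k + 1) := by ring
      _ ≤ m ^ n * (I * m ^ k) := mul_mono_right h
      _ = I * m ^ (n + k) := by ring
      _ ≤ I * (I ^ n * m ^ k) := mul_mono_right ih
      _ = I ^ (n + 1) * m ^ k := by ring

end Ideal

namespace MvPolynomial

variable {σ R : Type*}

theorem idealOfVars_eq_sup_span_X [CommSemiring R] (j : σ) :
    idealOfVars σ R = Ideal.span (X '' {j}ᶜ) ⊔ Ideal.span {X j} := by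
  rw [← Ideal.span_union, ← Set.image_singleton, ← Set.image_union, Set.compl_union_self,
    Set.image_univ]

theorem monomial_mem_span_X_mul_pow_idealOfVars [CommSemiring R] {s : σ →₀ ℕ} {i : σ} {k : ℕ}
    (hi : s i ≠ 0) (hs : k + 1 ≤ s.degree) (c : R) :
    monomial s c ∈ Ideal.span {X i} * idealOfVars σ R ^ k := by
  obtain ⟨s, rfl⟩ : ∃ s', s = Finsupp.single i 1 + s' :=
    ⟨s - Finsupp.single i 1, (add_tsub_cancel_of_le (Finsupp.single_le_iff.2 (by omega))).symm⟩
  rw [← one_mul c, ← monomial_mul]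
  refine Ideal.mul_mem_mul (Ideal.subset_span rfl) ((mem_pow_idealOfVars_iff ..).2 ?_)
  intro s' hs'
  rw [Finset.mem_singleton.1 (support_monomial_subset hs')]
  simp only [map_add, Finsupp.degree_single] at hs
  omega

theorem IsHomogeneous.sub_X_pow_mem [CommRing R] {f : MvPolynomial σ R} {j : σ} {k : ℕ}
    (hf : f.IsHomogeneous (k + 1)) (hj : coeff (Finsupp.single j (k + 1)) f = 1) :
    f - X j ^ (k + 1) ∈ Ideal.span (X '' {j}ᶜ) * idealOfVars σ R ^ k := by
  classical
  have hg : (f - X j ^ (k + 1)).IsHomogeneous (k + 1) := hf.sub (isHomogeneous_X_pow j _)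
  rw [as_sum (f - X j ^ (k + 1))]
  refine Ideal.sum_mem _ fun s hs => ?_
  have hcoeff := mem_support_iff.1 hs
  have hdeg : s.degree = k + 1 := by_contra fun h => hcoeff (hg.coeff_eq_zero h)
  have hsj : s ≠ Finsupp.single j (k + 1) := by
    rintro rfl
    exact hcoeff (by rw [coeff_sub, coeff_X_pow, if_pos rfl, hj, sub_self])
  obtain ⟨i, hij, hi⟩ : ∃ i ≠ j, s i ≠ 0 := by
    by_contra! h
    have hs_single : s = Finsupp.single j (s j) :=
      Finsupp.support_subset_singleton.1 fun i hi => by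
        by_contra hij
        exact Finsupp.mem_support_iff.1 hi (h i (by simpa using hij))
    rw [hs_single, Finsupp.degree_single] at hdeg
    exact hsj (hdeg ▸ hs_single)
  exact Ideal.mul_mono_left
    (Ideal.span_mono (Set.singleton_subset_iff.2 (Set.mem_image_of_mem X hij)))
    (monomial_mem_span_X_mul_pow_idealOfVars hi hdeg.ge _)

end MvPolynomial

theorem Fin.range_castSucc_eq_compl_last (d : ℕ) :
    Set.range (Fin.castSucc : Fin d → Fin (d + 1)) = {Fin.last d}ᶜ := by
  ext i
  simp [Fin.ext_iff]
  omega

open MvPolynomial in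
theorem stmt_13 (K : Type*) [Field K] (d r t : ℕ) (hr : 2 ≤ r) (hrt : r ≤ t + 1)
    (f : MvPolynomial (Fin (d + 1)) K) (hf : f.IsHomogeneous r)
    (hmonic : f.coeff (Finsupp.single (Fin.last d) r) = 1)
    (I m : Ideal (MvPolynomial (Fin (d + 1)) K ⧸ Ideal.span {f}))
    (hI : I = Ideal.span (Set.range fun i : Fin d =>
        Ideal.Quotient.mk (Ideal.span {f}) (X i.castSucc)))
    (hm : m = Ideal.span (Set.range fun i : Fin (d + 1) =>
        Ideal.Quotient.mk (Ideal.span {f}) (X i))) :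
    ∀ n : ℕ, 1 ≤ n → I ^ n ⊔ m ^ (n + t) = I ^ n := by
  intro n _
  obtain ⟨k, rfl⟩ : ∃ k, r = k + 1 := ⟨r - 1, by omega⟩
  set mk := Ideal.Quotient.mk (Ideal.span {f})
  have hI' : I = (Ideal.span (X '' {Fin.last d}ᶜ)).map mk := by
    rw [hI, Ideal.map_span, ← Set.image_comp, ← Fin.range_castSucc_eq_compl_last,
      ← Set.range_comp]
    rfl
  have hm_map : m = (idealOfVars (Fin (d + 1)) K).map mk := by
    rw [hm, Ideal.map_span, ← Set.range_comp]
    rfl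
  have hm' : m = I ⊔ Ideal.span {mk (X (Fin.last d))} := by
    rw [hm_map, idealOfVars_eq_sup_span_X (Fin.last d), Ideal.map_sup, ← hI', Ideal.map_span,
      Set.image_singleton]
  have hx : mk (X (Fin.last d)) ^ (k + 1) ∈ I * m ^ k := by
    have := Ideal.mem_map_of_mem mk (hf.sub_X_pow_mem hmonic)
    rwa [Ideal.map_mul, Ideal.map_pow, ← hI', ← hm_map, map_sub,
      Ideal.Quotient.eq_zero_iff_mem.2 (Ideal.mem_span_singleton_self f), zero_sub, neg_mem_iff,
      map_pow] at this
  have hred : m ^ (k + 1) ≤ I * m ^ k := by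
    rw [hm'] at hx ⊢
    exact Ideal.sup_span_singleton_pow_succ_le hx
  refine sup_eq_left.2 ?_
  calc m ^ (n + t) ≤ m ^ (n + k) := Ideal.pow_le_pow_right (by omega)
    _ ≤ I ^ n * m ^ k := Ideal.pow_add_le_pow_mul_of_pow_succ_le hred n
    _ ≤ I ^ n := Ideal.mul_le_left
end

section
/- Let $K$ be a field and $R = K[X_1,\dots,X_{d+1}]/(f)$ with $f$ homogeneous of degree $r \geq 2$, monic in $X_{d+1}$, $I = (x_1,\dots,x_d)$, $\mathfrak{m} = (x_1,\dots,x_{d+1})$, and fix $t \geq 0$. Then for all $n \geq 1$: $(x_1) \cap (I^n + \mathfrak{m}^{n+t}) = (x_1)\,(I^{n-1} + \mathfrak{m}^{n-1+t})$, where for $n = 1$ the right side is $(x_1) R$. -/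
/-!
Let `J` be generated by the variables `X i`, `i ∈ A` (the `x₁, …, x_d` of the paper), `M` by all
variables, and let `X k ∉ A` be the variable in which `f` is monic, so that `f ≡ X k ^ r` modulo
`J`. The ideals `J ^ n` and `J ^ n ⊔ M ^ s` are monomial: membership is a bound, for each exponent
of the support, on its partial degree in `A` or on its total degree.

Suppose `X x * g = a + q * f` with `x ∈ A` and `a ∈ J ^ (n+1) ⊔ M ^ (s+1)`. Setting `X x = 0` gives
`q̄ * c ∈ J ^ (n+1) ⊔ M ^ (s+1)` for the images `q̄, c` of `q, f`. Multiplication by `X k` does not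
change the partial degree in `A`, so from `c ≡ X k ^ r` an induction shows that `q * c ∈ J ^ n`
forces `q ∈ J ^ n`. As `c` is homogeneous of degree `r`, the part of `q̄` of degree below
`s + 1 - r` therefore lies in `J ^ (n+1)`, whence `q̄ * f ∈ J ^ (n+1) ⊔ M ^ (s+1)`. Writing
`q = q̄ + X x * q'` gives `X x * (g - q' * f) ∈ J ^ (n+1) ⊔ M ^ (s+1)`, and dividing this monomial
ideal by `X x` yields `g - q' * f ∈ J ^ n ⊔ M ^ s`.
-/

namespace MvPolynomial

section CommSemiring
variable {σ R : Type*} [CommSemiring R]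

theorem mem_restrictSupportIdeal_iff {s : Set (σ →₀ ℕ)} {hs : IsUpperSet s}
    {p : MvPolynomial σ R} : p ∈ restrictSupportIdeal R s hs ↔ ↑p.support ⊆ s := Iff.rfl

theorem restrictSupport_union (s t : Set (σ →₀ ℕ)) :
    restrictSupport R (s ∪ t) = restrictSupport R s ⊔ restrictSupport R t := by
  simp only [restrictSupport, AddMonoidAlgebra.supported, Submodule.comap_equiv_eq_map_symm,
    Finsupp.supported_union, Submodule.map_sup]

theorem restrictSupportIdeal_sup {s t : Set (σ →₀ ℕ)} (hs : IsUpperSet s) (ht : IsUpperSet t) :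
    restrictSupportIdeal R s hs ⊔ restrictSupportIdeal R t ht =
      restrictSupportIdeal R (s ∪ t) (hs.union ht) := by
  refine le_antisymm (sup_le ?_ ?_) fun p hp => ?_
  · exact fun p hp => hp.trans Set.subset_union_left
  · exact fun p hp => hp.trans Set.subset_union_right
  have hp' : p ∈ restrictSupport R (s ∪ t) := hp
  rw [restrictSupport_union, Submodule.mem_sup] at hp'
  obtain ⟨a, ha, b, hb, rfl⟩ := hp'
  exact Submodule.add_mem_sup ha hb

theorem support_monomial_one_mul (ν : σ →₀ ℕ) (p : MvPolynomial σ R) :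
    (monomial ν 1 * p).support = p.support.map (addLeftEmbedding ν) :=
  AddMonoidAlgebra.support_coeff_single_mul p 1 (by simp) ν

theorem monomial_one_mul_mem_restrictSupportIdeal_iff {s : Set (σ →₀ ℕ)} (hs : IsUpperSet s)
    (ν : σ →₀ ℕ) {p : MvPolynomial σ R} :
    monomial ν 1 * p ∈ restrictSupportIdeal R s hs ↔
      p ∈ restrictSupportIdeal R ((ν + ·) ⁻¹' s)
        (hs.preimage fun _ _ h => add_le_add_right h ν) := by
  simp [mem_restrictSupportIdeal_iff, support_monomial_one_mul, Set.subset_def]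

noncomputable def partialDegree (A : Set σ) : (σ →₀ ℕ) →+ ℕ :=
  Finsupp.weight (A.indicator 1)

theorem partialDegree_single (A : Set σ) (i : σ) (k : ℕ) [Decidable (i ∈ A)] :
    partialDegree A (Finsupp.single i k) = if i ∈ A then k else 0 := by
  simp [partialDegree, Finsupp.weight_single, Set.indicator_apply]

theorem partialDegree_mono (A : Set σ) : Monotone (partialDegree A) := fun μ ν h => by
  obtain ⟨δ, rfl⟩ := exists_add_of_le h
  simp

theorem monomial_one_mem_span_X_image_pow (A : Set σ) (μ : σ →₀ ℕ) :
    monomial μ (1 : R) ∈ Ideal.span (X '' A) ^ partialDegree A μ := by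
  classical
  induction μ using Finsupp.induction with
  | zero => simp
  | single_add i k μ _ _ ih =>
    rw [← mul_one (1 : R), ← monomial_mul, ← X_pow_eq_monomial, map_add, partialDegree_single,
      pow_add]
    refine Ideal.mul_mem_mul ?_ ih
    split_ifs with hi
    · exact Ideal.pow_mem_pow (Ideal.subset_span (Set.mem_image_of_mem X hi)) k
    · simp

theorem span_X_image_pow (A : Set σ) (n : ℕ) :
    Ideal.span (X '' A) ^ n = restrictSupportIdeal R (partialDegree A ⁻¹' Set.Ici n)
      ((isUpperSet_Ici n).preimage (partialDegree_mono A)) := by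
  classical
  apply le_antisymm
  · induction n with
    | zero => intro p _ μ _; simp
    | succ n ih =>
      rw [pow_succ, Ideal.mul_le]
      intro p hp q hq μ hμ
      obtain ⟨α, hα, β, hβ, rfl⟩ := Finset.mem_add.mp (support_mul p q hμ)
      obtain ⟨i, hi, hβi⟩ := mem_ideal_span_X_image.mp hq β hβ
      have hαn : n ≤ partialDegree A α := ih hp hα
      have hβ1 : 1 ≤ partialDegree A β :=
        calc 1 ≤ partialDegree A (Finsupp.single i (β i)) := by
              rw [partialDegree_single, if_pos hi]; omega
          _ ≤ partialDegree A β := partialDegree_mono A (Finsupp.single_le_iff.mpr le_rfl)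
      show n + 1 ≤ partialDegree A (α + β)
      rw [map_add]
      omega
  · intro p hp
    rw [p.as_sum]
    refine Ideal.sum_mem _ fun μ hμ => ?_
    rw [← mul_one (coeff μ p), ← C_mul_monomial]
    exact Ideal.mul_mem_left _ _
      (Ideal.pow_le_pow_right (hp hμ) (monomial_one_mem_span_X_image_pow (R := R) A μ))

theorem IsHomogeneous.mem_pow_idealOfVars {p : MvPolynomial σ R} {n : ℕ}
    (hp : p.IsHomogeneous n) : p ∈ idealOfVars σ R ^ n :=
  (mem_pow_idealOfVars_iff n p).mpr fun μ hμ => by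
    rw [Finsupp.degree_eq_weight_one]
    exact (hp (mem_support_iff.mp hμ)).ge

theorem mem_span_X_image_pow_sup_iff (A : Set σ) (n s : ℕ) (p : MvPolynomial σ R) :
    p ∈ Ideal.span (X '' A) ^ n ⊔ idealOfVars σ R ^ s ↔
      ∀ μ ∈ p.support, n ≤ partialDegree A μ ∨ s ≤ μ.degree := by
  rw [span_X_image_pow, pow_idealOfVars, restrictSupportIdeal_sup, mem_restrictSupportIdeal_iff]
  rfl

theorem X_pow_mul_mem_span_X_image_pow_iff {A : Set σ} {k : σ} (hk : k ∉ A) (r n : ℕ)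
    (q : MvPolynomial σ R) :
    X k ^ r * q ∈ Ideal.span (X '' A) ^ n ↔ q ∈ Ideal.span (X '' A) ^ n := by
  classical
  rw [X_pow_eq_monomial, span_X_image_pow, monomial_one_mul_mem_restrictSupportIdeal_iff]
  simp only [Set.preimage_preimage, map_add, partialDegree_single, if_neg hk, zero_add]

theorem X_mul_mem_span_X_image_pow_sup_iff {A : Set σ} {x : σ} (hx : x ∈ A) (n s : ℕ)
    (q : MvPolynomial σ R) :
    X x * q ∈ Ideal.span (X '' A) ^ (n + 1) ⊔ idealOfVars σ R ^ (s + 1) ↔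
      q ∈ Ideal.span (X '' A) ^ n ⊔ idealOfVars σ R ^ s := by
  classical
  simp [mem_span_X_image_pow_sup_iff, X, support_monomial_one_mul, partialDegree_single, hx,
    Nat.lt_one_add_iff]

variable [DecidableEq σ]

noncomputable def killVar (x : σ) : MvPolynomial σ R →ₐ[R] MvPolynomial σ R :=
  aeval (Function.update X x 0)

@[simp] theorem killVar_X_self (x : σ) : killVar x (X x : MvPolynomial σ R) = 0 := by
  simp [killVar]

@[simp] theorem killVar_X_of_ne {x i : σ} (h : i ≠ x) :
    killVar x (X i : MvPolynomial σ R) = X i := by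
  simp [killVar, h]

theorem killVar_monomial (x : σ) (μ : σ →₀ ℕ) (c : R) :
    killVar x (monomial μ c) = if μ x = 0 then monomial μ c else 0 := by
  rw [killVar, aeval_monomial, monomial_eq, algebraMap_eq]
  split_ifs with h
  · congr 1
    refine Finsupp.prod_congr fun i hi => ?_
    rw [Function.update_of_ne (by rintro rfl; exact Finsupp.mem_support_iff.mp hi h)]
  · rw [Finsupp.prod, Finset.prod_eq_zero (Finsupp.mem_support_iff.mpr h) (by simp [h]), mul_zero]

theorem coeff_killVar (x : σ) (p : MvPolynomial σ R) (μ : σ →₀ ℕ) :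
    coeff μ (killVar x p) = if μ x = 0 then coeff μ p else 0 := by
  induction p using induction_on' with
  | monomial ν c =>
    rw [killVar_monomial]
    by_cases h : ν = μ
    · subst h; split_ifs <;> simp
    · split_ifs <;> simp [coeff_monomial, h]
  | add p q hp hq => simp only [map_add, coeff_add, hp, hq]; split_ifs <;> simp

theorem support_killVar_subset (x : σ) (p : MvPolynomial σ R) :
    (killVar x p).support ⊆ p.support := by
  intro μ
  simp only [mem_support_iff, coeff_killVar]
  split_ifs <;> simp

theorem killVar_mem_restrictSupportIdeal {s : Set (σ →₀ ℕ)} {hs : IsUpperSet s}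
    (x : σ) {p : MvPolynomial σ R} (hp : p ∈ restrictSupportIdeal R s hs) :
    killVar x p ∈ restrictSupportIdeal R s hs :=
  (Finset.coe_subset.mpr (support_killVar_subset x p)).trans hp

theorem IsHomogeneous.killVar {p : MvPolynomial σ R} {n : ℕ} (hp : p.IsHomogeneous n) (x : σ) :
    (killVar x p).IsHomogeneous n := by
  have := hp.aeval (Function.update X x 0) fun i => by
    rcases eq_or_ne i x with rfl | h
    · simpa using isHomogeneous_zero σ R 1
    · simpa [h] using isHomogeneous_X R i
  rwa [one_mul] at this

end CommSemiring

section CommRing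
variable {σ R : Type*} [CommRing R] {A : Set σ} {k : σ} {r : ℕ}

theorem sub_killVar_mem_span_X [DecidableEq σ] (x : σ) (p : MvPolynomial σ R) :
    p - killVar x p ∈ Ideal.span {X x} := by
  rw [← Set.image_singleton, mem_ideal_span_X_image]
  intro μ hμ
  refine ⟨x, rfl, fun h => ?_⟩
  simp [coeff_killVar, h] at hμ

theorem IsHomogeneous.sub_X_pow_mem_span_X_image {f : MvPolynomial σ R} (hf : f.IsHomogeneous r)
    (hf1 : coeff (Finsupp.single k r) f = 1) (hA : ∀ i, i ≠ k → i ∈ A) :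
    f - X k ^ r ∈ Ideal.span (X '' A) := by
  classical
  rw [mem_ideal_span_X_image]
  intro μ hμ
  by_contra! hμA
  have hμk : μ = Finsupp.single k (μ k) := by
    ext i
    rcases eq_or_ne i k with rfl | hi
    · simp
    · simp [hi.symm, hμA i (hA i hi)]
  apply mem_support_iff.mp hμ
  rw [coeff_sub, coeff_X_pow, hμk]
  by_cases hr : μ k = r
  · rw [hr, hf1, if_pos rfl, sub_self]
  · rw [if_neg (by rw [Finsupp.single_eq_single_iff]; omega), sub_zero]
    exact hf.coeff_eq_zero (by simpa using hr)

theorem mem_span_X_image_pow_of_mul_mem {c : MvPolynomial σ R} (hk : k ∉ A)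
    (hc : c - X k ^ r ∈ Ideal.span (X '' A)) {n : ℕ} {q : MvPolynomial σ R}
    (h : q * c ∈ Ideal.span (X '' A) ^ n) : q ∈ Ideal.span (X '' A) ^ n := by
  suffices ∀ j ≤ n, q ∈ Ideal.span (X '' A) ^ j from this n le_rfl
  intro j hj
  induction j with
  | zero => simp
  | succ j ih =>
    rw [← X_pow_mul_mem_span_X_image_pow_iff hk r,
      show X k ^ r * q = q * c - q * (c - X k ^ r) by ring]
    exact sub_mem (Ideal.pow_le_pow_right hj h)
      (pow_succ (Ideal.span (X '' A : Set (MvPolynomial σ R))) j ▸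
        Ideal.mul_mem_mul (ih (by omega)) hc)

theorem mem_span_X_image_pow_sup_of_mul_mem {c : MvPolynomial σ R} (hk : k ∉ A)
    (hc : c - X k ^ r ∈ Ideal.span (X '' A)) (hch : c.IsHomogeneous r) {n s : ℕ}
    {ψ : MvPolynomial σ R} (h : ψ * c ∈ Ideal.span (X '' A) ^ n ⊔ idealOfVars σ R ^ s) :
    ψ ∈ Ideal.span (X '' A) ^ n ⊔ idealOfVars σ R ^ (s - r) := by
  classical
  have hψ : ψ ∈ restrictSupport R
      (Finsupp.degree ⁻¹' Set.Ici (s - r) ∪ Finsupp.degree ⁻¹' Set.Iio (s - r)) := by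
    rw [← Set.preimage_union, Set.Ici_union_Iio, Set.preimage_univ, restrictSupport_univ]
    exact Submodule.mem_top
  rw [restrictSupport_union, Submodule.mem_sup] at hψ
  obtain ⟨ψhi, hhi, ψlo, hlo, rfl⟩ := hψ
  replace hhi : ψhi ∈ idealOfVars σ R ^ (s - r) := (mem_pow_idealOfVars_iff _ _).mpr hhi
  have hhic : ψhi * c ∈ idealOfVars σ R ^ s :=
    Ideal.pow_le_pow_right (by omega) (pow_add (idealOfVars σ R) _ _ ▸
      Ideal.mul_mem_mul hhi hch.mem_pow_idealOfVars)
  have hloc : ψlo * c ∈ Ideal.span (X '' A) ^ n ⊔ idealOfVars σ R ^ s := by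
    rw [show ψlo * c = (ψhi + ψlo) * c - ψhi * c by ring]
    exact sub_mem h (Ideal.mem_sup_right hhic)
  refine add_mem (Ideal.mem_sup_right hhi)
    (Ideal.mem_sup_left (mem_span_X_image_pow_of_mul_mem hk hc ?_))
  rw [span_X_image_pow]
  intro μ hμ
  obtain ⟨α, hα, β, hβ, rfl⟩ := Finset.mem_add.mp (support_mul ψlo c hμ)
  have hα : α.degree < s - r := hlo hα
  have hβ : β.degree = r := by
    rw [Finsupp.degree_eq_weight_one]
    exact hch (mem_support_iff.mp hβ)
  have hdeg : (α + β).degree < s := by rw [map_add]; omega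
  exact ((mem_span_X_image_pow_sup_iff A n s _).mp hloc _ hμ).resolve_right (by omega)

theorem mem_sup_span_singleton_of_X_mul_mem [DecidableEq σ] {x : σ} (hx : x ∈ A) (hk : k ∉ A)
    {f : MvPolynomial σ R} (hf : f.IsHomogeneous r) (hfk : f - X k ^ r ∈ Ideal.span (X '' A))
    {n s : ℕ} {g : MvPolynomial σ R}
    (h : X x * g ∈ Ideal.span (X '' A) ^ (n + 1) ⊔ idealOfVars σ R ^ (s + 1) ⊔ Ideal.span {f}) :
    g ∈ Ideal.span (X '' A) ^ n ⊔ idealOfVars σ R ^ s ⊔ Ideal.span {f} := by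
  set P := Ideal.span (X '' A) ^ (n + 1) ⊔ idealOfVars σ R ^ (s + 1)
  obtain ⟨a, ha, _, hq, hag⟩ := Submodule.mem_sup.mp h
  obtain ⟨q, rfl⟩ := Ideal.mem_span_singleton'.mp hq
  have hkilla : killVar x a ∈ P := by
    simp only [P, span_X_image_pow, pow_idealOfVars, restrictSupportIdeal_sup] at ha ⊢
    exact killVar_mem_restrictSupportIdeal x ha
  have hkillf : killVar x f - X k ^ r ∈ Ideal.span (X '' A) := by
    rw [← pow_one (Ideal.span _), span_X_image_pow] at hfk ⊢
    simpa [killVar_X_of_ne (ne_of_mem_of_not_mem hx hk).symm] using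
      killVar_mem_restrictSupportIdeal x hfk
  have hψ : killVar x q * killVar x f ∈ P := by
    have := congrArg (killVar x) hag
    simp only [map_add, map_mul, killVar_X_self, zero_mul] at this
    rw [show killVar x q * killVar x f = -killVar x a by linear_combination this]
    exact neg_mem hkilla
  have hψf : killVar x q * f ∈ P := by
    have hle : (Ideal.span (X '' A) ^ (n + 1) ⊔ idealOfVars σ R ^ (s + 1 - r)) *
        idealOfVars σ R ^ r ≤ P := by
      rw [Ideal.sup_mul, ← pow_add]
      exact sup_le_sup Ideal.mul_le_left (Ideal.pow_le_pow_right (by omega))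
    exact hle (Ideal.mul_mem_mul (mem_span_X_image_pow_sup_of_mul_mem hk hkillf (hf.killVar x) hψ)
      hf.mem_pow_idealOfVars)
  obtain ⟨q', hq'⟩ := Ideal.mem_span_singleton'.mp (sub_killVar_mem_span_X x q)
  have hcolon : X x * (g - q' * f) ∈ P := by
    rw [show X x * (g - q' * f) = a + killVar x q * f by linear_combination -hag - f * hq']
    exact add_mem ha hψf
  rw [show g = (g - q' * f) + q' * f by ring]
  exact add_mem (Ideal.mem_sup_left ((X_mul_mem_span_X_image_pow_sup_iff hx n s _).mp hcolon))
    (Ideal.mem_sup_right (Ideal.mul_mem_left _ _ (Ideal.mem_span_singleton_self f)))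

end CommRing

end MvPolynomial

theorem Ideal.span_singleton_inf_map_eq_mul_map {S T : Type*} [CommRing S] [CommRing T]
    {π : S →+* T} (hπ : Function.Surjective π) {a : S} {P Q : Ideal S}
    (hQ : Ideal.span {a} * Q ≤ P) (hP : ∀ g, a * g ∈ P ⊔ RingHom.ker π → g ∈ Q ⊔ RingHom.ker π) :
    Ideal.span {π a} ⊓ P.map π = Ideal.span {π a} * Q.map π := by
  refine le_antisymm (fun y hy => ?_) (le_inf Ideal.mul_le_left ?_)
  · obtain ⟨hya, hyP⟩ := Submodule.mem_inf.mp hy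
    obtain ⟨z, rfl⟩ := Ideal.mem_span_singleton'.mp hya
    obtain ⟨g, rfl⟩ := hπ z
    have hag : a * g ∈ P ⊔ RingHom.ker π := by
      rw [← Ideal.comap_map_of_surjective' π hπ, Ideal.mem_comap, map_mul, mul_comm (π a)]
      exact hyP
    have hg := hP g hag
    rw [← Ideal.comap_map_of_surjective' π hπ, Ideal.mem_comap] at hg
    rw [mul_comm (π g)]
    exact Ideal.mul_mem_mul (Ideal.mem_span_singleton_self _) hg
  · rw [← Set.image_singleton, ← Ideal.map_span, ← Ideal.map_mul]
    exact Ideal.map_mono hQ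

open MvPolynomial in
theorem stmt_14_general (K : Type*) [Field K] (d r t : ℕ)
    (f : MvPolynomial (Fin (d + 1)) K) (hf : f.IsHomogeneous r)
    (hmonic : f.coeff (Finsupp.single (Fin.last d) r) = 1)
    (hd : 1 ≤ d)
    (I m : Ideal (MvPolynomial (Fin (d + 1)) K ⧸ Ideal.span {f}))
    (hI : I = Ideal.span (Set.range fun i : Fin d =>
        Ideal.Quotient.mk (Ideal.span {f}) (X i.castSucc)))
    (hm : m = Ideal.span (Set.range fun i : Fin (d + 1) =>
        Ideal.Quotient.mk (Ideal.span {f}) (X i))) :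
    ∀ n : ℕ, 1 ≤ n →
      Ideal.span {Ideal.Quotient.mk (Ideal.span {f}) (X (0 : Fin (d + 1)))} ⊓
          (I ^ n ⊔ m ^ (n + t))
        = Ideal.span {Ideal.Quotient.mk (Ideal.span {f}) (X (0 : Fin (d + 1)))} *
            (I ^ (n - 1) ⊔ m ^ (n - 1 + t)) := by
  intro n hn
  obtain ⟨n, rfl⟩ := Nat.exists_eq_add_of_le' hn
  set A := Set.range (Fin.castSucc : Fin d → Fin (d + 1))
  have hx : (0 : Fin (d + 1)) ∈ A := ⟨⟨0, hd⟩, rfl⟩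
  have hk : Fin.last d ∉ A := by simp [A, Fin.range_castSucc]
  have hfk := hf.sub_X_pow_mem_span_X_image hmonic (A := A) fun i hi =>
    Fin.exists_castSucc_eq.mpr hi
  have hI' : I = (Ideal.span (X '' A)).map (Ideal.Quotient.mk (Ideal.span {f})) := by
    rw [hI, Ideal.map_span, ← Set.range_comp, ← Set.range_comp]; rfl
  have hm' : m = (idealOfVars _ K).map (Ideal.Quotient.mk (Ideal.span {f})) := by
    rw [hm, idealOfVars, Ideal.map_span, ← Set.range_comp]; rfl
  rw [hI', hm', Nat.add_sub_cancel, add_right_comm, ← Ideal.map_pow, ← Ideal.map_pow,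
    ← Ideal.map_pow, ← Ideal.map_pow, ← Ideal.map_sup, ← Ideal.map_sup]
  refine Ideal.span_singleton_inf_map_eq_mul_map Ideal.Quotient.mk_surjective ?_ ?_
  · exact Ideal.span_singleton_mul_le_iff.mpr fun g hg =>
      (X_mul_mem_span_X_image_pow_sup_iff hx _ _ g).mpr hg
  · rw [Ideal.mk_ker]
    exact fun g hg => mem_sup_span_singleton_of_X_mul_mem hx hk hf hfk hg

open MvPolynomial in
theorem stmt_14 (K : Type*) [Field K] (d r t : ℕ) (hr : 2 ≤ r)
    (f : MvPolynomial (Fin (d + 1)) K) (hf : f.IsHomogeneous r)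
    (hmonic : f.coeff (Finsupp.single (Fin.last d) r) = 1)
    (hd : 1 ≤ d)
    (I m : Ideal (MvPolynomial (Fin (d + 1)) K ⧸ Ideal.span {f}))
    (hI : I = Ideal.span (Set.range fun i : Fin d =>
        Ideal.Quotient.mk (Ideal.span {f}) (X i.castSucc)))
    (hm : m = Ideal.span (Set.range fun i : Fin (d + 1) =>
        Ideal.Quotient.mk (Ideal.span {f}) (X i))) :
    ∀ n : ℕ, 1 ≤ n →
      Ideal.span {Ideal.Quotient.mk (Ideal.span {f}) (X (0 : Fin (d + 1)))} ⊓
          (I ^ n ⊔ m ^ (n + t))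
        = Ideal.span {Ideal.Quotient.mk (Ideal.span {f}) (X (0 : Fin (d + 1)))} *
            (I ^ (n - 1) ⊔ m ^ (n - 1 + t)) :=
  stmt_14_general K d r t f hf hmonic hd I m hI hm
end

section
/- In the ring $R = \mathbb{F}_2[X,Y,Z,W]/(X^4+Y^4+Z^4+W^4)$, for every $n \geq 1$ and every $c \in R$ that is not in the minimal prime $(x+y+z+w)$, and every element $u \in (x,y,z)^n + (x+y+z+w)$, there exist infinitely many $e$ such that $c\,u^{2^e} \in ((x,y,z)^n)^{[2^e]}$; in particular $w \in (x,y,z)^*$. -/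
/-!
Write `s = x + y + z + w`. In characteristic `2` we have `s ^ 4 = x ^ 4 + y ^ 4 + z ^ 4 + w ^ 4 = 0`,
so `s` is nilpotent and the Frobenius kills it from `q = 4` on: for `u = v + r s` with
`v ∈ (x, y, z) ^ n` and every `q = 2 ^ e ≥ 4` we get `u ^ q = v ^ q ∈ ((x, y, z) ^ n) ^ [q]`.
Since `w = s - (x + y + z)`, the case `n = 1`, `u = w` gives `w ∈ (x, y, z) ^ *`.
-/

namespace Ideal

variable {R : Type*} [CommRing R] (p : ℕ) [ExpChar R p]

theorem pow_char_pow_mem_span_image_pow {S : Set R} {n : ℕ} {v : R} (hv : v ∈ span S ^ n)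
    (e : ℕ) : v ^ p ^ e ∈ span ((· ^ p ^ e) '' S) ^ n := by
  have hmap := mem_map_of_mem (iterateFrobenius R p e) hv
  rwa [Ideal.map_pow, map_span] at hmap

theorem pow_char_pow_mem_span_image_pow_of_mem_sup {S : Set R} {n : ℕ} {s u : R} {k e : ℕ}
    (hs : s ^ p ^ k = 0) (hke : k ≤ e) (hu : u ∈ span S ^ n ⊔ span {s}) :
    u ^ p ^ e ∈ span ((· ^ p ^ e) '' S) ^ n := by
  obtain ⟨v, hv, _, hrs, rfl⟩ := Submodule.mem_sup.mp hu
  obtain ⟨r, rfl⟩ := mem_span_singleton'.mp hrs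
  have hse : s ^ p ^ e = 0 := by
    rw [← Nat.pow_sub_mul_pow p hke, pow_mul', hs, zero_pow (pow_ne_zero _ (expChar_ne_zero R p))]
  rw [add_pow_expChar_pow, mul_pow, hse, mul_zero, add_zero]
  exact pow_char_pow_mem_span_image_pow p hv e

end Ideal

open MvPolynomial in
theorem stmt_19
    (f : MvPolynomial (Fin 4) (ZMod 2))
    (hf : f = X 0 ^ 4 + X 1 ^ 4 + X 2 ^ 4 + X 3 ^ 4)
    (x y z w : MvPolynomial (Fin 4) (ZMod 2) ⧸ Ideal.span {f})
    (hx : x = Ideal.Quotient.mk (Ideal.span {f}) (X 0))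
    (hy : y = Ideal.Quotient.mk (Ideal.span {f}) (X 1))
    (hz : z = Ideal.Quotient.mk (Ideal.span {f}) (X 2))
    (hw : w = Ideal.Quotient.mk (Ideal.span {f}) (X 3)) :
    (∀ n : ℕ, 1 ≤ n →
      ∀ c : MvPolynomial (Fin 4) (ZMod 2) ⧸ Ideal.span {f},
        c ∉ Ideal.span {x + y + z + w} →
        ∀ u ∈ (Ideal.span {x, y, z}) ^ n ⊔ Ideal.span {x + y + z + w},
          {e : ℕ | c * u ^ (2 ^ e) ∈
            (Ideal.span {x ^ (2 ^ e), y ^ (2 ^ e), z ^ (2 ^ e)}) ^ n}.Infinite) ∧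
    (∀ e : ℕ, 2 ≤ e → w ^ (2 ^ e) ∈ Ideal.span {x ^ (2 ^ e), y ^ (2 ^ e), z ^ (2 ^ e)}) := by
  have : Nontrivial (MvPolynomial (Fin 4) (ZMod 2) ⧸ Ideal.span {f}) := by
    refine Ideal.Quotient.nontrivial_iff.mpr fun htop => ?_
    have hunit := (Ideal.span_singleton_eq_top.mp htop).map constantCoeff
    simp [hf] at hunit
  have : CharP (MvPolynomial (Fin 4) (ZMod 2) ⧸ Ideal.span {f}) 2 :=
    charP_of_injective_algebraMap (algebraMap (ZMod 2) _).injective 2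
  have hf0 : x ^ 4 + y ^ 4 + z ^ 4 + w ^ 4 = 0 := by
    simp only [hx, hy, hz, hw, ← map_pow, ← map_add, ← hf, Ideal.Quotient.eq_zero_iff_mem]
    exact Ideal.mem_span_singleton_self f
  have hs : (x + y + z + w) ^ 2 ^ 2 = 0 := by
    rw [add_pow_char_pow, add_pow_char_pow, add_pow_char_pow]
    simpa only [Nat.reducePow] using hf0
  have key : ∀ n, ∀ u ∈ Ideal.span {x, y, z} ^ n ⊔ Ideal.span {x + y + z + w}, ∀ e, 2 ≤ e →
      u ^ 2 ^ e ∈ Ideal.span {x ^ 2 ^ e, y ^ 2 ^ e, z ^ 2 ^ e} ^ n := fun n u hu e he => by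
    simpa [Set.image_insert_eq] using Ideal.pow_char_pow_mem_span_image_pow_of_mem_sup 2 hs he hu
  refine ⟨fun n _ c _ u hu => (Set.Ici_infinite 2).mono fun e he =>
    Ideal.mul_mem_left _ c (key n u hu e he), fun e he => ?_⟩
  have hw_mem : w ∈ Ideal.span {x, y, z} ^ 1 ⊔ Ideal.span {x + y + z + w} := by
    have hxyz : x + y + z ∈ Ideal.span {x, y, z} ^ 1 := by
      rw [pow_one]
      exact add_mem (add_mem (Ideal.subset_span (by simp)) (Ideal.subset_span (by simp)))
        (Ideal.subset_span (by simp))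
    have hs_mem := Ideal.mem_span_singleton_self (x + y + z + w)
    simpa using sub_mem (Ideal.mem_sup_right hs_mem) (Ideal.mem_sup_left hxyz)
  simpa using key 1 w hw_mem e he
end
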